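/- For the lattice pyramid pyr(C) over the 3-dimensional unit cube C = [0,1]³, one has c₁(pyr(C)) = -1. In particular, c₁ can be negative for (non-smooth) lattice polytopes. -/

import Mathlib

open Filter
open scoped BigOperators

noncomputable section

/-- Ambient space `ℝ^d`. -/
abbrev V (d : ℕ) := Fin d → ℝ

/-- A point of `ℝ^d` is a lattice point if all coordinates are integers. -/
def IsLatticePoint {d : ℕ} (x : V d) : Prop := ∀ i, ∃ z : ℤ, x i = (z : ℝ)

/-- A lattice polytope is the convex hull of finitely many lattice points. -/
def IsLatticePolytope {d : ℕ} (P : Set (V d)) : Prop :=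
  ∃ S : Finset (V d), (∀ v ∈ S, IsLatticePoint v) ∧ P = convexHull ℝ (S : Set (V d))

/-- The face of `P` in direction of the linear functional `ℓ`. -/
def faceSet {d : ℕ} (P : Set (V d)) (ℓ : V d →ₗ[ℝ] ℝ) : Set (V d) :=
  {x ∈ P | ∀ y ∈ P, ℓ y ≤ ℓ x}

/-- `F` is a (nonempty, exposed) face of `P`. -/
def IsFaceOf {d : ℕ} (P F : Set (V d)) : Prop :=
  F.Nonempty ∧ ∃ ℓ : V d →ₗ[ℝ] ℝ, F = faceSet P ℓ

/-- `v` is a vertex of `P`. -/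
def IsVertexOf {d : ℕ} (P : Set (V d)) (v : V d) : Prop := IsFaceOf P {v}

/-- The (affine) dimension of a subset of `ℝ^d`. -/
def pdim {d : ℕ} (F : Set (V d)) : ℕ := Module.finrank ℝ (vectorSpan ℝ F)

/-- Number of lattice points in the `t`-fold dilate of `F` (the Ehrhart counting
function; for a lattice polytope it agrees with the Ehrhart polynomial). -/
def ehr {d : ℕ} (F : Set (V d)) (t : ℕ) : ℕ :=
   {x ∈ (fun y => (t : ℝ) • y) '' F | IsLatticePoint x}.ncard

/-- The normalized lattice volume of a lattice polytope `F` with respect to the lattice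
`ℤ^d ∩ aff F`: it is `(dim F)!` times the leading coefficient of the Ehrhart polynomial,
recovered here as a limit. -/
def lvol {d : ℕ} (F : Set (V d)) : ℝ :=
  limUnder atTop (fun t : ℕ => ((pdim F).factorial * ehr F t : ℝ) / (t : ℝ) ^ (pdim F))

/-- The invariant `c_t(P) = ∑_{k=0}^{dim P} (-1)^{dim P-k} ((k+t)!/k!) ∑_{F face, dim F = k} lvol F`. -/
def cInv {d : ℕ} (P : Set (V d)) (t : ℕ) : ℝ :=
  ∑ k ∈ Finset.range (pdim P + 1),
    (-1 : ℝ) ^ (pdim P - k) * ((k + t).factorial / k.factorial : ℝ) *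
      ∑ᶠ F ∈ {F : Set (V d) | IsFaceOf P F ∧ pdim F = k}, lvol F

/-- `f(P,t) = ∑_{k=0}^{d} ∑_{F face, dim F = k} (-1)^{d-k} (k+1)! ehr(F,t) t^{d-k}`. -/
def fpoly {d : ℕ} (P : Set (V d)) (t : ℕ) : ℝ :=
  ∑ k ∈ Finset.range (pdim P + 1),
    (-1 : ℝ) ^ (pdim P - k) * (k + 1).factorial *
      (∑ᶠ F ∈ {F : Set (V d) | IsFaceOf P F ∧ pdim F = k}, (ehr F t : ℝ)) *
      (t : ℝ) ^ (pdim P - k)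

/-- The lattice pyramid `conv(P × {0} ∪ {(w,1)})` over `P` with apex over the point `w`. -/
def pyrPt {d : ℕ} (P : Set (V d)) (w : V d) : Set (V (d + 1)) :=
  convexHull ℝ ((fun x => Fin.snoc x (0 : ℝ)) '' P ∪ {Fin.snoc w (1 : ℝ)})

/-- `w` embedded into `ℝ^{d+r}` by appending `r` zero coordinates. -/
def liftVec {d : ℕ} (w : V d) : (r : ℕ) → V (d + r)
  | 0 => w
  | r + 1 => Fin.snoc (liftVec w r) 0

/-- The `r`-fold lattice pyramid over `P`, taking apexes over (the lift of) the vertex `w`. -/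
def pyrIter {d : ℕ} (P : Set (V d)) (w : V d) : (r : ℕ) → Set (V (d + r))
  | 0 => P
  | r + 1 => pyrPt (pyrIter P w r) (liftVec w r)

/-- The unit cube `[0,1]^d`. -/
def unitCube (d : ℕ) : Set (V d) := Set.Icc (0 : V d) 1

/-!
The faces of `P = pyr([0,1]^d)` are the apex, the faces `G` of the base cube, and the pyramids
`pyr(G)`. A face of the cube with `f` free coordinates has `(t+1)^f` lattice points in its
`t`-th dilate, so dimension `f` and normalized volume `f!`. Slicing `t • pyr(G)` at integer
heights shows that its Ehrhart function is `∑_{h ≤ t} (h+1)^f ~ t^{f+1}/(f+1)`, so `pyr(G)` has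
dimension `f + 1` and again normalized volume `f!`.

The face of `P` exposed by `ℓ` is the convex hull of the `ℓ`-maximal vertices. On the cube these
are read off from the signs of the coefficients of `ℓ`, and the apex joins them exactly when its
value is at least the maximum over the base.

For `d = 3` this gives `c₁(P) = 9 - 2·20 + 3·24 - 4·18 + 5·6 = -1`.
-/

open Set
open scoped Pointwise

variable {d : ℕ}

def snocZero : V d →ₗ[ℝ] V (d + 1) where
  toFun x := Fin.snoc x 0
  map_add' x y := by ext j; refine Fin.lastCases ?_ (fun i => ?_) j <;> simp
  map_smul' c x := by ext j; refine Fin.lastCases ?_ (fun i => ?_) j <;> simp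

@[simp] lemma snocZero_apply (x : V d) : snocZero x = Fin.snoc x 0 := rfl

lemma snocZero_injective : Function.Injective (snocZero : V d →ₗ[ℝ] V (d + 1)) :=
  Fin.snoc_left_injective (α := fun _ => ℝ) 0

abbrev apex (d : ℕ) : V (d + 1) := Fin.snoc (0 : V d) 1

lemma pyrPt_zero_eq_convexHull (K : Set (V d)) :
    pyrPt K 0 = convexHull ℝ (insert (apex d) (snocZero '' K)) := by
  rw [pyrPt, Set.union_singleton]; rfl

lemma pyrPt_convexHull (S : Set (V d)) :
    pyrPt (convexHull ℝ S) 0 = convexHull ℝ (insert (apex d) (snocZero '' S)) := by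
  rw [pyrPt_zero_eq_convexHull, LinearMap.image_convexHull, ← Set.union_singleton,
    convexHull_convexHull_union_left, Set.union_singleton]

lemma apex_mem_pyrPt (K : Set (V d)) : apex d ∈ pyrPt K 0 := by
  rw [pyrPt_zero_eq_convexHull]; exact subset_convexHull ℝ _ (mem_insert _ _)

lemma snocZero_mem_pyrPt {K : Set (V d)} {y : V d} (hy : y ∈ K) : snocZero y ∈ pyrPt K 0 := by
  rw [pyrPt_zero_eq_convexHull]
  exact subset_convexHull ℝ _ (mem_insert_of_mem _ (mem_image_of_mem _ hy))

lemma mem_pyrPt_zero {K : Set (V d)} (hK : Convex ℝ K) (hne : K.Nonempty) {x : V (d + 1)} :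
    x ∈ pyrPt K 0 ↔ x (Fin.last d) ∈ Icc 0 1 ∧ Fin.init x ∈ (1 - x (Fin.last d)) • K := by
  rw [pyrPt_zero_eq_convexHull, convexHull_insert (hne.image _),
    (hK.linear_image snocZero).convexHull_eq, convexJoin_singleton_left]
  simp only [mem_iUnion₂, mem_image, exists_prop, segment, Set.mem_ofPred_eq]
  constructor
  · rintro ⟨_, ⟨y, hy, rfl⟩, a, b, ha, hb, hab, rfl⟩
    obtain rfl : b = 1 - a := by linarith
    refine ⟨by simpa using ⟨ha, by linarith⟩, ?_⟩
    convert smul_mem_smul_set hy using 1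
    ext i
    simp [Fin.init_def]
  · rintro ⟨⟨h0, h1⟩, y, hy, hxy⟩
    refine ⟨_, ⟨y, hy, rfl⟩, x (Fin.last d), 1 - x (Fin.last d), h0, by linarith, by ring, ?_⟩
    ext j
    refine Fin.lastCases ?_ (fun i => ?_) j
    · simp
    · simpa [Fin.init_def] using congrFun hxy i

lemma preimage_snocZero_pyrPt {K : Set (V d)} (hK : Convex ℝ K) (hne : K.Nonempty) :
    snocZero ⁻¹' pyrPt K 0 = K := by
  ext y
  simp [mem_pyrPt_zero hK hne]

lemma snocZero_ne_apex (y : V d) : snocZero y ≠ apex d := fun h => by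
  simpa using congrFun h (Fin.last d)

lemma mem_smul_pyrPt_zero {K : Set (V d)} (hK : Convex ℝ K) (hne : K.Nonempty) {c : ℝ}
    (hc : 0 ≤ c) {x : V (d + 1)} :
    x ∈ c • pyrPt K 0 ↔ x (Fin.last d) ∈ Icc 0 c ∧ Fin.init x ∈ (c - x (Fin.last d)) • K := by
  rcases hc.eq_or_lt with rfl | hc
  · have hK0 : (0 : ℝ) • K = 0 := zero_smul_set hne
    rw [zero_smul_set ⟨_, apex_mem_pyrPt K⟩, Set.mem_zero, Icc_self, mem_singleton_iff]
    constructor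
    · rintro rfl
      exact ⟨rfl, by rw [Pi.zero_apply, sub_zero, hK0]; rfl⟩
    · rintro ⟨hl, hi⟩
      rw [hl, sub_zero, hK0, Set.mem_zero] at hi
      rw [← Fin.snoc_init_self x, hi, hl]
      ext j
      refine Fin.lastCases ?_ (fun i => ?_) j <;> simp
  · rw [mem_smul_set_iff_inv_smul_mem₀ hc.ne', mem_pyrPt_zero hK hne,
      ← smul_mem_smul_set_iff₀ hc.ne' ((1 - (c⁻¹ • x) (Fin.last d)) • K) (Fin.init (c⁻¹ • x)),
      smul_smul]
    refine and_congr ?_ ?_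
    · simp only [Pi.smul_apply, smul_eq_mul, mem_Icc, inv_mul_le_iff₀ hc, mul_one,
        mul_nonneg_iff_of_pos_left (inv_pos.2 hc)]
    · have hinit : c • Fin.init (c⁻¹ • x) = Fin.init x := by
        ext i; simp [Fin.init_def, hc.ne']
      have hscale : c * (1 - (c⁻¹ • x) (Fin.last d)) = c - x (Fin.last d) := by
        simp only [Pi.smul_apply, smul_eq_mul]; field_simp
      rw [hinit, hscale]

def latticePoints (S : Set (V d)) : Set (V d) := {x ∈ S | IsLatticePoint x}

lemma ehr_eq_ncard_latticePoints (F : Set (V d)) (t : ℕ) :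
    ehr F t = (latticePoints ((t : ℝ) • F)).ncard := by
  rw [ehr, Set.image_smul]; rfl

lemma isLatticePoint_snoc {y : V d} {h : ℝ} :
    IsLatticePoint (Fin.snoc y h : V (d + 1)) ↔ IsLatticePoint y ∧ ∃ z : ℤ, h = z := by
  simp [IsLatticePoint, Fin.forall_fin_succ']

lemma isLatticePoint_apex : IsLatticePoint (apex d) :=
  isLatticePoint_snoc.2 ⟨fun _ => ⟨0, by simp⟩, 1, by simp⟩

lemma latticePoints_smul_pyrPt_zero {K : Set (V d)} (hK : Convex ℝ K) (hne : K.Nonempty)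
    (t : ℕ) :
    latticePoints ((t : ℝ) • pyrPt K 0) = ⋃ h ∈ (Finset.range (t + 1) : Set ℕ),
      (fun y => (Fin.snoc y (h : ℝ) : V (d + 1))) '' latticePoints (((t - h : ℕ) : ℝ) • K) := by
  ext x
  simp only [latticePoints, Set.mem_ofPred_eq, mem_smul_pyrPt_zero hK hne (Nat.cast_nonneg t),
    mem_iUnion, mem_image, Finset.coe_range, mem_Iio, exists_prop]
  constructor
  · rintro ⟨⟨⟨h0, ht⟩, hx⟩, hlat⟩
    rw [← Fin.snoc_init_self x, isLatticePoint_snoc] at hlat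
    obtain ⟨hlat, z, hz⟩ := hlat
    lift z to ℕ using (by exact_mod_cast hz ▸ h0)
    rw [Int.cast_natCast] at hz
    have hzt : z ≤ t := by exact_mod_cast hz ▸ ht
    refine ⟨z, by omega, Fin.init x, ⟨by rwa [Nat.cast_sub hzt, ← hz], hlat⟩, ?_⟩
    rw [← hz]
    exact Fin.snoc_init_self x
  · rintro ⟨h, hh, y, ⟨hy, hlat⟩, rfl⟩
    rw [Nat.cast_sub (by omega)] at hy
    refine ⟨⟨⟨by simp, by simpa using (by omega : h ≤ t)⟩, by simpa [Fin.init_def] using hy⟩,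
      isLatticePoint_snoc.2 ⟨hlat, h, by simp⟩⟩

lemma ehr_pyrPt_zero {K : Set (V d)} (hK : Convex ℝ K) (hne : K.Nonempty)
    (hfin : ∀ n : ℕ, (latticePoints ((n : ℝ) • K)).Finite) (t : ℕ) :
    ehr (pyrPt K 0) t = ∑ h ∈ Finset.range (t + 1), ehr K h := by
  have hdisj : (Finset.range (t + 1) : Set ℕ).PairwiseDisjoint fun h : ℕ =>
      (fun y => (Fin.snoc y (h : ℝ) : V (d + 1))) '' latticePoints (((t - h : ℕ) : ℝ) • K) := by
    rintro h - h' - hne'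
    refine Set.disjoint_left.2 ?_
    rintro _ ⟨y, -, rfl⟩ ⟨y', -, he⟩
    have hlast := congrFun he (Fin.last d)
    simp only [Fin.snoc_last, Nat.cast_inj] at hlast
    exact hne' hlast.symm
  rw [ehr_eq_ncard_latticePoints, latticePoints_smul_pyrPt_zero hK hne,
    Set.Finite.ncard_biUnion (Finset.finite_toSet _) (fun h _ => (hfin _).image _) hdisj,
    finsum_mem_coe_finset, ← Finset.sum_range_reflect]
  refine Finset.sum_congr rfl fun h hh => ?_
  rw [ncard_image_of_injective _ (Fin.snoc_left_injective (α := fun _ => ℝ) _),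
    ehr_eq_ncard_latticePoints, Nat.add_sub_cancel,
    Nat.sub_sub_self (Finset.mem_range_succ_iff.1 hh)]

lemma latticePoints_image_snocZero (S : Set (V d)) :
    latticePoints (snocZero '' S) = snocZero '' latticePoints S := by
  ext x
  simp only [latticePoints, mem_image, Set.mem_ofPred_eq]
  constructor
  · rintro ⟨⟨y, hy, rfl⟩, hl⟩
    exact ⟨y, ⟨hy, (isLatticePoint_snoc.1 hl).1⟩, rfl⟩
  · rintro ⟨y, ⟨hy, hl⟩, rfl⟩
    exact ⟨⟨y, hy, rfl⟩, isLatticePoint_snoc.2 ⟨hl, 0, by simp⟩⟩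

lemma ehr_image_snocZero (K : Set (V d)) (t : ℕ) : ehr (snocZero '' K) t = ehr K t := by
  rw [ehr_eq_ncard_latticePoints, ehr_eq_ncard_latticePoints, ← image_smul_set,
    latticePoints_image_snocZero, ncard_image_of_injective _ snocZero_injective]

lemma ehr_singleton {p : V d} (hp : IsLatticePoint p) (t : ℕ) : ehr {p} t = 1 := by
  have hlat : IsLatticePoint ((t : ℝ) • p) := fun i => by
    obtain ⟨z, hz⟩ := hp i
    exact ⟨t * z, by simp [hz]⟩
  rw [ehr_eq_ncard_latticePoints, smul_set_singleton, ← ncard_singleton ((t : ℝ) • p)]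
  congr 1
  ext x
  simp only [latticePoints, mem_singleton_iff, Set.mem_ofPred_eq, and_iff_left_iff_imp]
  rintro rfl
  exact hlat

lemma vectorSpan_image_snocZero (K : Set (V d)) :
    vectorSpan ℝ (snocZero '' K) = (vectorSpan ℝ K).map snocZero := by
  simpa using (AffineMap.map_vectorSpan (k := ℝ) snocZero.toAffineMap (s := K)).symm

lemma pdim_image_snocZero (K : Set (V d)) : pdim (snocZero '' K) = pdim K := by
  rw [pdim, pdim, vectorSpan_image_snocZero]
  exact (Submodule.equivMapOfInjective _ snocZero_injective _).finrank_eq.symm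

lemma pdim_singleton (p : V d) : pdim {p} = 0 := by
  rw [pdim, vectorSpan_singleton, finrank_bot]

lemma pdim_pyrPt_zero {K : Set (V d)} (hne : K.Nonempty) : pdim (pyrPt K 0) = pdim K + 1 := by
  obtain ⟨y, hy⟩ := hne
  have hspan : vectorSpan ℝ (pyrPt K 0) =
      vectorSpan ℝ (snocZero '' K) ⊔ ℝ ∙ (apex d -ᵥ snocZero y) := by
    rw [pyrPt_zero_eq_convexHull, ← direction_affineSpan, affineSpan_convexHull,
      ← affineSpan_insert_affineSpan,
      AffineSubspace.direction_affineSpan_insert (mem_affineSpan ℝ (mem_image_of_mem _ hy)),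
      direction_affineSpan, sup_comm]
  have hapex : apex d -ᵥ snocZero y ∉ vectorSpan ℝ (snocZero '' K) := by
    rw [vectorSpan_image_snocZero]
    rintro ⟨v, -, hv⟩
    simpa using congrFun hv (Fin.last d)
  rw [pdim, hspan, Submodule.finrank_sup_span_singleton hapex, ← pdim, pdim_image_snocZero]

lemma lvol_eq_of_tendsto {F : Set (V d)} {L : ℝ}
    (h : Tendsto (fun t : ℕ => ((pdim F).factorial * ehr F t : ℝ) / (t : ℝ) ^ pdim F) atTop
      (nhds L)) : lvol F = L :=
  h.limUnder_eq

lemma lvol_image_snocZero (K : Set (V d)) : lvol (snocZero '' K) = lvol K := by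
  simp only [lvol, pdim_image_snocZero, ehr_image_snocZero]

lemma lvol_singleton {p : V d} (hp : IsLatticePoint p) : lvol {p} = 1 :=
  lvol_eq_of_tendsto (by simp [pdim_singleton, ehr_singleton hp])

lemma faceSet_image {e : ℕ} (f : V e →ₗ[ℝ] V d) (S : Set (V e)) (ℓ : V d →ₗ[ℝ] ℝ) :
    faceSet (f '' S) ℓ = f '' faceSet S (ℓ ∘ₗ f) := by
  ext x
  simp only [faceSet, mem_image, Set.mem_ofPred_eq, LinearMap.comp_apply]
  constructor
  · rintro ⟨⟨y, hy, rfl⟩, hmax⟩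
    exact ⟨y, ⟨hy, fun y' hy' => hmax _ ⟨y', hy', rfl⟩⟩, rfl⟩
  · rintro ⟨y, ⟨hy, hmax⟩, rfl⟩
    exact ⟨⟨y, hy, rfl⟩, by rintro _ ⟨y', hy', rfl⟩; exact hmax y' hy'⟩

lemma mem_faceSet_insert {S : Set (V d)} {ℓ : V d →ₗ[ℝ] ℝ} {v : V d} (hv : v ∈ faceSet S ℓ)
    (p x : V d) : x ∈ faceSet (insert p S) ℓ ↔ x ∈ insert p S ∧ ℓ p ≤ ℓ x ∧ ℓ v ≤ ℓ x := by
  simp only [faceSet, Set.mem_ofPred_eq, forall_mem_insert]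
  refine and_congr_right fun _ => and_congr_right fun _ =>
    ⟨fun h => h v hv.1, fun h y hy => (hv.2 y hy).trans h⟩

lemma faceSet_insert_of_lt {S : Set (V d)} {ℓ : V d →ₗ[ℝ] ℝ} {v p : V d} (hv : v ∈ faceSet S ℓ)
    (hp : ℓ p < ℓ v) : faceSet (insert p S) ℓ = faceSet S ℓ := by
  ext x
  rw [mem_faceSet_insert hv]
  constructor
  · rintro ⟨rfl | hx, hpx, hvx⟩
    · exact absurd hvx hp.not_ge
    · exact ⟨hx, fun y hy => (hv.2 y hy).trans hvx⟩
  · intro hx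
    have hvx : ℓ v ≤ ℓ x := hx.2 v hv.1
    exact ⟨mem_insert_of_mem _ hx.1, hp.le.trans hvx, hvx⟩

lemma faceSet_insert_of_eq {S : Set (V d)} {ℓ : V d →ₗ[ℝ] ℝ} {v p : V d} (hv : v ∈ faceSet S ℓ)
    (hp : ℓ p = ℓ v) : faceSet (insert p S) ℓ = insert p (faceSet S ℓ) := by
  ext x
  rw [mem_faceSet_insert hv, mem_insert_iff, mem_insert_iff]
  constructor
  · rintro ⟨rfl | hx, hpx, hvx⟩
    · exact Or.inl rfl
    · exact Or.inr ⟨hx, fun y hy => (hv.2 y hy).trans hvx⟩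
  · rintro (rfl | hx)
    · exact ⟨Or.inl rfl, le_rfl, hp.ge⟩
    · have hvx : ℓ v ≤ ℓ x := hx.2 v hv.1
      exact ⟨Or.inr hx.1, hp.le.trans hvx, hvx⟩

lemma faceSet_insert_of_gt {S : Set (V d)} {ℓ : V d →ₗ[ℝ] ℝ} {v p : V d} (hv : v ∈ faceSet S ℓ)
    (hp : ℓ v < ℓ p) : faceSet (insert p S) ℓ = {p} := by
  ext x
  rw [mem_faceSet_insert hv, mem_singleton_iff]
  constructor
  · rintro ⟨rfl | hx, hpx, -⟩
    · rfl
    · exact absurd ((hv.2 x hx).trans_lt hp) hpx.not_gt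
  · rintro rfl
    exact ⟨mem_insert _ _, le_rfl, hp.le⟩

lemma faceSet_convexHull (S : Set (V d)) (ℓ : V d →ₗ[ℝ] ℝ) :
    faceSet (convexHull ℝ S) ℓ = convexHull ℝ (faceSet S ℓ) := by
  refine Subset.antisymm ?_ fun x hx => ?_
  · rintro x ⟨hx, hmax⟩
    rw [convexHull_eq] at hx
    obtain ⟨ι, t, w, z, hw0, hw1, hz, rfl⟩ := hx
    have hle : ∀ i ∈ t, w i * ℓ (z i) ≤ w i * ℓ (t.centerMass w z) := fun i hi =>
      mul_le_mul_of_nonneg_left (hmax _ (subset_convexHull ℝ S (hz i hi))) (hw0 i hi)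
    have heq : ∀ i ∈ t, w i * ℓ (z i) = w i * ℓ (t.centerMass w z) := by
      refine (Finset.sum_eq_sum_iff_of_le hle).1 ?_
      rw [← Finset.sum_mul, hw1, one_mul, Finset.centerMass_eq_of_sum_1 _ _ hw1, map_sum]
      simp [smul_eq_mul]
    rw [← Finset.centerMass_filter_ne_zero]
    refine Finset.centerMass_mem_convexHull _ (fun i hi => hw0 i (Finset.mem_filter.1 hi).1)
      (by rw [Finset.sum_filter_ne_zero, hw1]; exact one_pos) fun i hi => ?_
    obtain ⟨hi, hwi⟩ := Finset.mem_filter.1 hi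
    refine ⟨hz i hi, fun y hy => ?_⟩
    rw [mul_left_cancel₀ hwi (heq i hi)]
    exact hmax y (subset_convexHull ℝ S hy)
  · obtain ⟨v, hv⟩ := convexHull_nonempty_iff.1 ⟨x, hx⟩
    have hbelow : convexHull ℝ S ⊆ ℓ ⁻¹' Iic (ℓ v) :=
      convexHull_min (fun y hy => hv.2 y hy) ((convex_Iic _).linear_preimage ℓ)
    have hlevel : convexHull ℝ (faceSet S ℓ) ⊆ ℓ ⁻¹' {ℓ v} :=
      convexHull_min (fun y hy => le_antisymm (hv.2 y hy.1) (hy.2 v hv.1))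
        ((convex_singleton _).linear_preimage ℓ)
    refine ⟨convexHull_mono (sep_subset _ _) hx, fun y hy => ?_⟩
    rw [show ℓ x = ℓ v from hlevel hx]
    exact hbelow hy

/-! A face of `[0,1]^d` is encoded by `σ : Fin d → Option Bool`: coordinate `i` is free if
`σ i = none` and fixed to the value `b` if `σ i = some b`. -/

def coordSet : Option Bool → Set ℝ
  | none => Icc 0 1
  | some b => {(b.toNat : ℝ)}

def coordVerts : Option Bool → Set ℝ
  | none => {0, 1}
  | some b => {(b.toNat : ℝ)}

def cubeFace (σ : Fin d → Option Bool) : Set (V d) := univ.pi fun i => coordSet (σ i)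

def cubeFaceVerts (σ : Fin d → Option Bool) : Set (V d) := univ.pi fun i => coordVerts (σ i)

def nFree (σ : Fin d → Option Bool) : ℕ := (Finset.univ.filter fun i => σ i = none).card

def cubeVertex (σ : Fin d → Option Bool) : V d := fun i => ((σ i).getD false).toNat

lemma convexHull_coordVerts (o : Option Bool) : convexHull ℝ (coordVerts o) = coordSet o := by
  cases o <;> simp [coordVerts, coordSet, convexHull_pair, segment_eq_Icc]

lemma convexHull_cubeFaceVerts (σ : Fin d → Option Bool) :
    convexHull ℝ (cubeFaceVerts σ) = cubeFace σ := by
  simp only [cubeFaceVerts, convexHull_pi, convexHull_coordVerts, cubeFace]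

lemma convex_cubeFace (σ : Fin d → Option Bool) : Convex ℝ (cubeFace σ) := by
  rw [← convexHull_cubeFaceVerts]; exact convex_convexHull ℝ _

lemma cubeVertex_mem_cubeFaceVerts (σ : Fin d → Option Bool) :
    cubeVertex σ ∈ cubeFaceVerts σ := fun i _ => by
  rcases h : σ i with _ | b <;> simp [cubeVertex, coordVerts, h]

lemma cubeVertex_mem_cubeFace (σ : Fin d → Option Bool) : cubeVertex σ ∈ cubeFace σ := by
  rw [← convexHull_cubeFaceVerts]; exact subset_convexHull ℝ _ (cubeVertex_mem_cubeFaceVerts σ)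

lemma unitCube_eq_cubeFace : unitCube d = cubeFace fun _ => none := by
  rw [unitCube, ← pi_univ_Icc]; rfl

lemma nFree_none : nFree (fun _ => none : Fin d → Option Bool) = d := by
  simp [nFree]

def cubeCenter (σ : Fin d → Option Bool) : V d := fun i => (σ i).elim (1 / 2) fun b => b.toNat

lemma cubeCenter_mem_cubeFace (σ : Fin d → Option Bool) : cubeCenter σ ∈ cubeFace σ :=
  fun i _ => by rcases h : σ i with _ | b <;> norm_num [cubeCenter, coordSet, h]

lemma cubeFace_injective : Function.Injective (cubeFace : (Fin d → Option Bool) → Set (V d)) := by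
  intro σ τ h
  ext1 i
  have hστ := (h ▸ cubeCenter_mem_cubeFace σ : cubeCenter σ ∈ cubeFace τ) i (mem_univ i)
  have hτσ := (h ▸ cubeCenter_mem_cubeFace τ : cubeCenter τ ∈ cubeFace σ) i (mem_univ i)
  rcases hσ : σ i with _ | b <;> rcases hτ : τ i with _ | c <;>
    simp only [cubeCenter, coordSet, hσ, hτ, Option.elim, mem_singleton_iff] at hστ hτσ
  · rfl
  · cases c <;> norm_num at hστ
  · cases b <;> norm_num at hτσ
  · cases b <;> cases c <;> simp_all

lemma smul_Icc_zero_one {c : ℝ} (hc : 0 ≤ c) : c • Icc (0 : ℝ) 1 = Icc 0 c := by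
  rcases hc.eq_or_lt with rfl | hc
  · rw [zero_smul_set (nonempty_Icc.2 zero_le_one), Icc_self]; rfl
  · simp [LinearOrderedField.smul_Icc hc]

def coordLattice : Option Bool → ℕ → Finset ℤ
  | none, t => Finset.Icc 0 t
  | some b, t => {((t * b.toNat : ℕ) : ℤ)}

lemma intCast_mem_smul_coordSet (o : Option Bool) (t : ℕ) (z : ℤ) :
    (z : ℝ) ∈ (t : ℝ) • coordSet o ↔ z ∈ coordLattice o t := by
  cases o with
  | none =>
    simp only [coordSet, coordLattice, smul_Icc_zero_one (Nat.cast_nonneg t), mem_Icc,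
      Finset.mem_Icc]
    norm_cast
  | some b =>
    simp only [coordSet, coordLattice, smul_set_singleton, mem_singleton_iff,
      Finset.mem_singleton, smul_eq_mul]
    norm_cast

lemma card_coordLattice (o : Option Bool) (t : ℕ) :
    (coordLattice o t).card = if o = none then t + 1 else 1 := by
  cases o <;> simp [coordLattice]

lemma latticePoints_univ_pi {s : Fin d → Set ℝ} {A : Fin d → Finset ℤ}
    (hA : ∀ i (z : ℤ), (z : ℝ) ∈ s i ↔ z ∈ A i) :
    latticePoints (univ.pi s) =
      (fun z : Fin d → ℤ => fun i => (z i : ℝ)) '' (Fintype.piFinset A : Set (Fin d → ℤ)) := by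
  ext x
  simp only [latticePoints, IsLatticePoint, Set.mem_ofPred_eq, Set.mem_pi, Set.mem_univ,
    true_implies, mem_image, Finset.mem_coe, Fintype.mem_piFinset]
  constructor
  · rintro ⟨hs, hz⟩
    choose z hz using hz
    exact ⟨z, fun i => (hA i _).1 (hz i ▸ hs i), funext fun i => (hz i).symm⟩
  · rintro ⟨z, hz, rfl⟩
    exact ⟨fun i => (hA i _).2 (hz i), fun i => ⟨z i, rfl⟩⟩

lemma latticePoints_smul_cubeFace (σ : Fin d → Option Bool) (t : ℕ) :
    latticePoints ((t : ℝ) • cubeFace σ) =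
      (fun z : Fin d → ℤ => fun i => (z i : ℝ)) ''
        (Fintype.piFinset fun i => coordLattice (σ i) t : Set (Fin d → ℤ)) := by
  rw [cubeFace, smul_set_univ_pi]
  exact latticePoints_univ_pi fun i => intCast_mem_smul_coordSet (σ i) t

lemma ehr_cubeFace (σ : Fin d → Option Bool) (t : ℕ) : ehr (cubeFace σ) t = (t + 1) ^ nFree σ := by
  have hinj : Function.Injective fun z : Fin d → ℤ => fun i => (z i : ℝ) :=
    fun z z' h => funext fun i => Int.cast_injective (congrFun h i)
  rw [ehr_eq_ncard_latticePoints, latticePoints_smul_cubeFace, ncard_image_of_injective _ hinj,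
    ncard_coe_finset, Fintype.card_piFinset]
  simp only [card_coordLattice, Finset.prod_ite, Finset.prod_const, one_pow, mul_one, nFree]

lemma finite_latticePoints_smul_cubeFace (σ : Fin d → Option Bool) (t : ℕ) :
    (latticePoints ((t : ℝ) • cubeFace σ)).Finite := by
  rw [latticePoints_smul_cubeFace]
  exact (Finset.finite_toSet _).image _

lemma update_cubeVertex_mem_cubeFace {σ : Fin d → Option Bool} {i : Fin d} (hi : σ i = none)
    {r : ℝ} (hr : r ∈ Icc 0 1) : Function.update (cubeVertex σ) i r ∈ cubeFace σ := by
  intro j _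
  by_cases hji : j = i
  · subst hji
    simpa [coordSet, hi] using hr
  · rw [Function.update_of_ne hji]
    exact cubeVertex_mem_cubeFace σ j (mem_univ j)

lemma vectorSpan_cubeFace (σ : Fin d → Option Bool) :
    vectorSpan ℝ (cubeFace σ) =
      Submodule.span ℝ (range fun i : {i // σ i = none} => (Pi.single i.1 1 : V d)) := by
  apply le_antisymm
  · rw [vectorSpan_def, Submodule.span_le]
    rintro _ ⟨x, hx, y, hy, rfl⟩
    show x -ᵥ y ∈ _
    rw [← Finset.univ_sum_single (x -ᵥ y)]
    refine Submodule.sum_mem _ fun i _ => ?_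
    rcases hσ : σ i with _ | b
    · rw [show Pi.single i ((x -ᵥ y) i) = (x -ᵥ y) i • (Pi.single i 1 : V d) by
        rw [← Pi.single_smul, smul_eq_mul, mul_one]]
      exact Submodule.smul_mem _ _ (Submodule.subset_span ⟨⟨i, hσ⟩, rfl⟩)
    · have hxi := hx i (mem_univ i)
      have hyi := hy i (mem_univ i)
      simp only [coordSet, hσ, mem_singleton_iff] at hxi hyi
      simp [hxi, hyi]
  · rw [Submodule.span_le]
    rintro _ ⟨⟨i, hi⟩, rfl⟩
    have hsingle : (Pi.single i 1 : V d) =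
        Function.update (cubeVertex σ) i 1 -ᵥ Function.update (cubeVertex σ) i 0 := by
      ext j
      by_cases hji : j = i
      · subst hji; simp
      · simp [hji]
    show (Pi.single i 1 : V d) ∈ vectorSpan ℝ (cubeFace σ)
    rw [hsingle]
    exact vsub_mem_vectorSpan ℝ (update_cubeVertex_mem_cubeFace hi (by simp))
      (update_cubeVertex_mem_cubeFace hi (by simp))

lemma pdim_cubeFace (σ : Fin d → Option Bool) : pdim (cubeFace σ) = nFree σ := by
  have hli : LinearIndependent ℝ fun i : {i // σ i = none} => (Pi.single i.1 1 : V d) := by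
    convert (Pi.basisFun ℝ (Fin d)).linearIndependent.comp _ Subtype.val_injective
    simp
  rw [pdim, vectorSpan_cubeFace, finrank_span_eq_card hli, Fintype.card_subtype, nFree]

lemma tendsto_one_add_div_pow (c : ℝ) (m : ℕ) :
    Tendsto (fun t : ℕ => (1 + c / t) ^ m) atTop (nhds 1) := by
  simpa using ((tendsto_const_div_atTop_nhds_zero_nat c).const_add 1).pow m

lemma add_pow_div_pow {t : ℝ} (ht : t ≠ 0) (c : ℝ) (m : ℕ) :
    (t + c) ^ m / t ^ m = (1 + c / t) ^ m := by
  rw [← div_pow, add_div, div_self ht]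

lemma lvol_cubeFace (σ : Fin d → Option Bool) : lvol (cubeFace σ) = (nFree σ).factorial := by
  apply lvol_eq_of_tendsto
  rw [pdim_cubeFace]
  have h := (tendsto_one_add_div_pow 1 (nFree σ)).const_mul ((nFree σ).factorial : ℝ)
  rw [mul_one] at h
  refine h.congr' ?_
  filter_upwards [eventually_ne_atTop 0] with t ht
  rw [ehr_cubeFace, Nat.cast_pow, Nat.cast_succ, mul_div_assoc,
    add_pow_div_pow (Nat.cast_ne_zero.2 ht)]

/-- Comparison with `∫ x ^ p`. -/
lemma sum_range_add_one_pow_bounds (p t : ℕ) :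
    ((t : ℝ) + 1) ^ (p + 1) / (p + 1) ≤ ∑ h ∈ Finset.range (t + 1), ((h : ℝ) + 1) ^ p ∧
      ∑ h ∈ Finset.range (t + 1), ((h : ℝ) + 1) ^ p ≤ ((t : ℝ) + 2) ^ (p + 1) / (p + 1) := by
  have hmono : ∀ a b : ℝ, 0 ≤ a → MonotoneOn (fun x : ℝ => x ^ p) (Icc a b) :=
    fun a b ha x hx y _ hxy => pow_le_pow_left₀ (ha.trans hx.1) hxy p
  constructor
  · have h := (hmono 0 _ le_rfl).integral_le_sum (x₀ := 0) (a := t + 1)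
    simp only [zero_add, integral_pow] at h
    push_cast at h
    simpa [add_comm] using h
  · have h := (hmono 1 _ zero_le_one).sum_le_integral (x₀ := 1) (a := t + 1)
    rw [integral_pow] at h
    push_cast at h
    refine (by simpa [add_comm] using h : _ ≤ _).trans ?_
    gcongr
    rw [show 1 + ((t : ℝ) + 1) = t + 2 by ring]
    linarith

lemma lvol_pyrPt_cubeFace (σ : Fin d → Option Bool) :
    lvol (pyrPt (cubeFace σ) 0) = (nFree σ).factorial := by
  have hne : (cubeFace σ).Nonempty := ⟨_, cubeVertex_mem_cubeFace σ⟩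
  apply lvol_eq_of_tendsto
  rw [pdim_pyrPt_zero hne, pdim_cubeFace]
  set f := nFree σ
  have hlo := (tendsto_one_add_div_pow 1 (f + 1)).const_mul (f.factorial : ℝ)
  have hhi := (tendsto_one_add_div_pow 2 (f + 1)).const_mul (f.factorial : ℝ)
  rw [mul_one] at hlo hhi
  have hfac : ((f + 1).factorial : ℝ) = f.factorial * (f + 1) := by
    push_cast [Nat.factorial_succ]; ring
  have hehr : ∀ t : ℕ, (ehr (pyrPt (cubeFace σ) 0) t : ℝ) =
      ∑ h ∈ Finset.range (t + 1), ((h : ℝ) + 1) ^ f := fun t => by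
    rw [ehr_pyrPt_zero (convex_cubeFace σ) hne (finite_latticePoints_smul_cubeFace σ)]
    push_cast [ehr_cubeFace]
    rfl
  refine tendsto_of_tendsto_of_tendsto_of_le_of_le' hlo hhi ?_ ?_ <;>
    filter_upwards [eventually_ne_atTop 0] with t ht <;>
    rw [← add_pow_div_pow (Nat.cast_ne_zero.2 ht), ← mul_div_assoc, hfac, hehr, mul_assoc,
      div_le_div_iff_of_pos_right (by positivity)] <;>
    gcongr
  · exact (div_le_iff₀' (by positivity)).1 (sum_range_add_one_pow_bounds f t).1
  · exact (le_div_iff₀' (by positivity)).1 (sum_range_add_one_pow_bounds f t).2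

def signOf (a : ℝ) : Option Bool := if 0 < a then some true else if a < 0 then some false else none

def signPattern (ℓ : V d →ₗ[ℝ] ℝ) : Fin d → Option Bool := fun i => signOf (ℓ (Pi.single i 1))

lemma linearMap_apply_eq_sum (ℓ : V d →ₗ[ℝ] ℝ) (y : V d) :
    ℓ y = ∑ i, y i * ℓ (Pi.single i 1) := by
  conv_lhs => rw [← Finset.univ_sum_single y]
  simp only [map_sum]
  refine Finset.sum_congr rfl fun i _ => ?_
  rw [← smul_eq_mul, ← map_smul, ← Pi.single_smul, smul_eq_mul, mul_one]

lemma coordVerts_subset (o : Option Bool) : coordVerts o ⊆ coordVerts none := by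
  cases o with
  | none => exact subset_rfl
  | some b => cases b <;> simp [coordVerts]

lemma mul_le_max_of_mem_coordVerts {a r : ℝ} (hr : r ∈ coordVerts none) : a * r ≤ max a 0 := by
  rcases hr with rfl | rfl <;> simp

lemma mem_coordVerts_signOf_iff {a r : ℝ} (hr : r ∈ coordVerts none) :
    r ∈ coordVerts (signOf a) ↔ a * r = max a 0 := by
  rcases lt_trichotomy a 0 with ha | rfl | ha
  · rcases hr with rfl | rfl <;> simp [signOf, coordVerts, ha, ha.not_gt, ha.le, ha.ne]
  · simpa [signOf, coordVerts] using hr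
  · rcases hr with rfl | rfl <;> simp [signOf, coordVerts, ha, ha.le, ha.ne]

lemma faceSet_cubeVerts (ℓ : V d →ₗ[ℝ] ℝ) :
    faceSet (cubeFaceVerts fun _ => none) ℓ = cubeFaceVerts (signPattern ℓ) := by
  set c : Fin d → ℝ := fun i => ℓ (Pi.single i 1)
  have hle : ∀ y ∈ cubeFaceVerts fun _ => none, ∀ i ∈ Finset.univ, y i * c i ≤ max (c i) 0 :=
    fun y hy i _ => mul_comm (y i) (c i) ▸ mul_le_max_of_mem_coordVerts (hy i (mem_univ i))
  have hmax : ∀ y ∈ cubeFaceVerts fun _ => none,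
      ℓ y = ∑ i, max (c i) 0 ↔ y ∈ cubeFaceVerts (signPattern ℓ) := fun y hy => by
    rw [linearMap_apply_eq_sum, Finset.sum_eq_sum_iff_of_le (hle y hy)]
    simp only [cubeFaceVerts, Set.mem_pi, Set.mem_univ, true_implies, Finset.mem_univ]
    exact forall_congr' fun i => by
      rw [mul_comm]; exact (mem_coordVerts_signOf_iff (hy i (mem_univ i))).symm
  have hsub : cubeFaceVerts (signPattern ℓ) ⊆ cubeFaceVerts fun _ => none :=
    pi_mono fun i _ => coordVerts_subset _
  have htop := cubeVertex_mem_cubeFaceVerts (signPattern ℓ)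
  ext y
  constructor
  · rintro ⟨hy, hymax⟩
    refine (hmax y hy).1 (le_antisymm ?_ ?_)
    · rw [linearMap_apply_eq_sum]; exact Finset.sum_le_sum (hle y hy)
    · exact ((hmax _ (hsub htop)).2 htop).symm.trans_le (hymax _ (hsub htop))
  · intro hy
    refine ⟨hsub hy, fun y' hy' => ?_⟩
    rw [(hmax y (hsub hy)).2 hy, linearMap_apply_eq_sum]
    exact Finset.sum_le_sum (hle y' hy')

/-- Indexes the faces of `pyr([0,1]^d)`: `none` is the apex, `inl σ` the face `σ` of the base
cube and `inr σ` the pyramid over it. -/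
abbrev PyrFaceIndex (d : ℕ) := Option ((Fin d → Option Bool) ⊕ (Fin d → Option Bool))

def pyrFace : PyrFaceIndex d → Set (V (d + 1))
  | none => {apex d}
  | some (.inl σ) => snocZero '' cubeFace σ
  | some (.inr σ) => pyrPt (cubeFace σ) 0

def exposedFaceIndex (ℓ : V (d + 1) →ₗ[ℝ] ℝ) : PyrFaceIndex d :=
  let σ := signPattern (ℓ ∘ₗ snocZero)
  if ℓ (apex d) < ℓ (snocZero (cubeVertex σ)) then some (.inl σ)
  else if ℓ (apex d) = ℓ (snocZero (cubeVertex σ)) then some (.inr σ) else none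

lemma faceSet_pyr_unitCube (ℓ : V (d + 1) →ₗ[ℝ] ℝ) :
    faceSet (pyrPt (unitCube d) 0) ℓ = pyrFace (exposedFaceIndex ℓ) := by
  set σ := signPattern (ℓ ∘ₗ snocZero)
  have hbase : faceSet (snocZero '' cubeFaceVerts fun _ => none) ℓ =
      snocZero '' cubeFaceVerts σ := by
    rw [faceSet_image, faceSet_cubeVerts]
  have hv : snocZero (cubeVertex σ) ∈ faceSet (snocZero '' cubeFaceVerts fun _ => none) ℓ :=
    hbase ▸ mem_image_of_mem _ (cubeVertex_mem_cubeFaceVerts σ)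
  rw [unitCube_eq_cubeFace, ← convexHull_cubeFaceVerts, pyrPt_convexHull, faceSet_convexHull,
    exposedFaceIndex]
  split_ifs with hlt heq
  · rw [faceSet_insert_of_lt hv hlt, hbase, ← LinearMap.image_convexHull,
      convexHull_cubeFaceVerts]
    rfl
  · rw [faceSet_insert_of_eq hv heq, hbase, ← pyrPt_convexHull, convexHull_cubeFaceVerts]
    rfl
  · rw [faceSet_insert_of_gt hv (lt_of_le_of_ne (not_lt.1 hlt) (Ne.symm heq)),
      convexHull_singleton]
    rfl

def extendToApex (ℓ₀ : V d →ₗ[ℝ] ℝ) (r : ℝ) : V (d + 1) →ₗ[ℝ] ℝ :=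
  ℓ₀ ∘ₗ LinearMap.funLeft ℝ ℝ Fin.castSucc + r • LinearMap.proj (Fin.last d)

@[simp] lemma extendToApex_snocZero (ℓ₀ : V d →ₗ[ℝ] ℝ) (r : ℝ) (y : V d) :
    extendToApex ℓ₀ r (snocZero y) = ℓ₀ y := by
  simp [extendToApex, LinearMap.funLeft, Function.comp_def]

@[simp] lemma extendToApex_comp_snocZero (ℓ₀ : V d →ₗ[ℝ] ℝ) (r : ℝ) :
    extendToApex ℓ₀ r ∘ₗ snocZero = ℓ₀ :=
  LinearMap.ext fun y => extendToApex_snocZero ℓ₀ r y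

@[simp] lemma extendToApex_apex (ℓ₀ : V d →ₗ[ℝ] ℝ) (r : ℝ) : extendToApex ℓ₀ r (apex d) = r := by
  have h0 : LinearMap.funLeft ℝ ℝ Fin.castSucc (apex d) = 0 := by
    ext i; simp [LinearMap.funLeft]
  simp [extendToApex, h0]

def signCoeff : Option Bool → ℝ
  | none => 0
  | some true => 1
  | some false => -1

def signFunctional (σ : Fin d → Option Bool) : V d →ₗ[ℝ] ℝ :=
  ∑ i, signCoeff (σ i) • LinearMap.proj i

lemma signPattern_signFunctional (σ : Fin d → Option Bool) :
    signPattern (signFunctional σ) = σ := by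
  ext1 i
  have hcoeff : signFunctional σ (Pi.single i 1) = signCoeff (σ i) := by
    simp [signFunctional, Pi.single_apply]
  rw [signPattern, hcoeff]
  rcases σ i with _ | _ | _ <;> simp [signOf, signCoeff]

lemma exposedFaceIndex_surjective :
    Function.Surjective (exposedFaceIndex : (V (d + 1) →ₗ[ℝ] ℝ) → _) := by
  rintro (_ | σ | σ)
  · exact ⟨extendToApex 0 1, by simp [exposedFaceIndex, -snocZero_apply]⟩
  · refine ⟨extendToApex (signFunctional σ) (signFunctional σ (cubeVertex σ) - 1), ?_⟩
    simp [exposedFaceIndex, signPattern_signFunctional, -snocZero_apply]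
  · refine ⟨extendToApex (signFunctional σ) (signFunctional σ (cubeVertex σ)), ?_⟩
    simp [exposedFaceIndex, signPattern_signFunctional, -snocZero_apply]

lemma pyrFace_nonempty :
    ∀ i : PyrFaceIndex d, (pyrFace i).Nonempty
  | none => singleton_nonempty _
  | some (.inl σ) => ⟨_, mem_image_of_mem _ (cubeVertex_mem_cubeFace σ)⟩
  | some (.inr _) => ⟨_, apex_mem_pyrPt _⟩

lemma isFaceOf_pyr_unitCube_iff {F : Set (V (d + 1))} :
    IsFaceOf (pyrPt (unitCube d) 0) F ↔ F ∈ range pyrFace := by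
  constructor
  · rintro ⟨-, ℓ, rfl⟩
    exact ⟨_, (faceSet_pyr_unitCube ℓ).symm⟩
  · rintro ⟨i, rfl⟩
    obtain ⟨ℓ, rfl⟩ := exposedFaceIndex_surjective i
    exact ⟨pyrFace_nonempty _, ℓ, (faceSet_pyr_unitCube ℓ).symm⟩

lemma pyrFace_injective : Function.Injective (pyrFace (d := d)) := by
  have hbase : Function.Injective fun σ : Fin d → Option Bool => snocZero '' cubeFace σ :=
    (image_injective.2 snocZero_injective).comp cubeFace_injective
  have hside : Function.Injective fun σ : Fin d → Option Bool => pyrPt (cubeFace σ) 0 :=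
    fun σ τ h => cubeFace_injective <| by
      simpa only [preimage_snocZero_pyrPt (convex_cubeFace _) ⟨_, cubeVertex_mem_cubeFace _⟩]
        using congrArg (snocZero ⁻¹' ·) h
  have hapex : ∀ σ, apex d ∉ snocZero '' cubeFace σ := fun σ ⟨y, _, hy⟩ => snocZero_ne_apex y hy
  have hvertex : ∀ σ : Fin d → Option Bool, snocZero (cubeVertex σ) ∈ pyrPt (cubeFace σ) 0 :=
    fun σ => snocZero_mem_pyrPt (cubeVertex_mem_cubeFace σ)
  rintro (_ | σ | σ) (_ | τ | τ) h <;> simp only [pyrFace] at h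
  · rfl
  · exact absurd (h ▸ mem_singleton _) (hapex τ)
  · exact absurd (h ▸ hvertex τ : _ ∈ ({apex d} : Set _)) (snocZero_ne_apex _)
  · exact absurd (h ▸ mem_singleton _) (hapex σ)
  · exact congrArg (some ∘ Sum.inl) (hbase h)
  · exact absurd (h ▸ apex_mem_pyrPt _) (hapex σ)
  · exact absurd (h ▸ hvertex σ : _ ∈ ({apex d} : Set _)) (snocZero_ne_apex _)
  · exact absurd (h ▸ apex_mem_pyrPt _) (hapex τ)
  · exact congrArg (some ∘ Sum.inr) (hside h)

def pyrFaceDim : PyrFaceIndex d → ℕ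
  | none => 0
  | some (.inl σ) => nFree σ
  | some (.inr σ) => nFree σ + 1

def pyrFaceLvol : PyrFaceIndex d → ℕ
  | none => 1
  | some (.inl σ) => (nFree σ).factorial
  | some (.inr σ) => (nFree σ).factorial

lemma pdim_pyrFace : ∀ i, pdim (pyrFace (d := d) i) = pyrFaceDim i
  | none => pdim_singleton _
  | some (.inl σ) => (pdim_image_snocZero _).trans (pdim_cubeFace σ)
  | some (.inr σ) => by
    rw [pyrFace, pdim_pyrPt_zero ⟨_, cubeVertex_mem_cubeFace σ⟩, pdim_cubeFace, pyrFaceDim]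

lemma lvol_pyrFace : ∀ i, lvol (pyrFace (d := d) i) = pyrFaceLvol i
  | none => by simpa [pyrFace, pyrFaceLvol] using lvol_singleton isLatticePoint_apex
  | some (.inl σ) => (lvol_image_snocZero _).trans (lvol_cubeFace σ)
  | some (.inr σ) => lvol_pyrPt_cubeFace σ

lemma pdim_pyr_unitCube : pdim (pyrPt (unitCube d) 0) = d + 1 := by
  rw [unitCube_eq_cubeFace]
  exact (pdim_pyrFace (some (.inr _))).trans (by rw [pyrFaceDim, nFree_none])

lemma finsum_lvol_faces_pyr_unitCube (k : ℕ) :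
    ∑ᶠ F ∈ {F : Set (V (d + 1)) | IsFaceOf (pyrPt (unitCube d) 0) F ∧ pdim F = k}, lvol F =
      ((∑ i with pyrFaceDim (d := d) i = k, pyrFaceLvol i : ℕ) : ℝ) := by
  have hfaces : {F : Set (V (d + 1)) | IsFaceOf (pyrPt (unitCube d) 0) F ∧ pdim F = k} =
      pyrFace '' ↑(Finset.univ.filter fun i => pyrFaceDim (d := d) i = k) := by
    ext F
    simp only [Set.mem_ofPred_eq, isFaceOf_pyr_unitCube_iff, mem_range, mem_image,
      Finset.coe_filter, Finset.mem_univ, true_and]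
    constructor
    · rintro ⟨⟨i, rfl⟩, hk⟩
      exact ⟨i, pdim_pyrFace i ▸ hk, rfl⟩
    · rintro ⟨i, hk, rfl⟩
      exact ⟨⟨i, rfl⟩, (pdim_pyrFace i).trans hk⟩
  rw [hfaces, finsum_mem_image pyrFace_injective.injOn, finsum_mem_coe_finset, Nat.cast_sum]
  exact Finset.sum_congr rfl fun i _ => lvol_pyrFace i

/-- For the lattice pyramid over the 3-dimensional unit cube, `c₁(pyr(C)) = -1`;
in particular `c₁` can be negative for lattice polytopes. -/
theorem c1_pyr_cube :
    cInv (pyrPt (unitCube 3) 0) 1 = -1 ∧ cInv (pyrPt (unitCube 3) 0) 1 < 0 := by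
  -- k = 0: 8 cube vertices and the apex; k = 1: 12 cube edges (1!) and 8 apex edges (0!);
  -- k = 2: 6 squares (2!) and 12 triangles (1!); k = 3: the cube (3!) and 6 square pyramids (2!);
  -- k = 4: P itself (3!)
  have h0 : ∑ i with pyrFaceDim (d := 3) i = 0, pyrFaceLvol i = 9 := by decide
  have h1 : ∑ i with pyrFaceDim (d := 3) i = 1, pyrFaceLvol i = 20 := by decide
  have h2 : ∑ i with pyrFaceDim (d := 3) i = 2, pyrFaceLvol i = 24 := by decide
  have h3 : ∑ i with pyrFaceDim (d := 3) i = 3, pyrFaceLvol i = 18 := by decide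
  have h4 : ∑ i with pyrFaceDim (d := 3) i = 4, pyrFaceLvol i = 6 := by decide
  have hc : cInv (pyrPt (unitCube 3) 0) 1 = -1 := by
    simp only [cInv, pdim_pyr_unitCube, finsum_lvol_faces_pyr_unitCube, h0, h1, h2, h3, h4,
      Finset.sum_range_succ, Finset.sum_range_zero]
    norm_num [Nat.factorial]
  exact ⟨hc, hc ▸ by norm_num⟩
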